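/- Let P and Q be positive semidefinite operators on a finite-dimensional complex Hilbert space. Then the squared Frobenius (Hilbert–Schmidt) norm of √P − √Q is at most the trace norm of P − Q: ‖√P − √Q‖₂² ≤ ‖P − Q‖₁. -/

import Mathlib

/-!
Put `S = √P - √Q` and `T = √P + √Q`. Then `S T + T S = 2 (P - Q)` and `-T ≤ S ≤ T`. In an
orthonormal eigenbasis of `S`, with eigenvalues `λᵢ`, the `i`-th diagonal entry of `P - Q` is
therefore `λᵢ Tᵢᵢ` with `Tᵢᵢ ≥ |λᵢ|`, so `λᵢ² ≤ |(P - Q)ᵢᵢ|`. Summing, `‖S‖₂² = ∑ λᵢ²` is bounded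
by the sum of the absolute diagonal entries of `P - Q` in some orthonormal basis, and that sum is
at most `tr |P - Q| = ‖P - Q‖₁` because `-|D| ≤ D ≤ |D|`.
-/

open Matrix
open scoped ComplexOrder

/-- The square root of a positive semidefinite matrix (the definition removed from Mathlib). -/
noncomputable def Matrix.PosSemidef.sqrt {n 𝕜 : Type*} [Fintype n] [RCLike 𝕜] [DecidableEq n]
    {A : Matrix n n 𝕜} (hA : A.PosSemidef) : Matrix n n 𝕜 :=
  (hA.1.eigenvectorUnitary : Matrix n n 𝕜) * diagonal ((↑) ∘ (√·) ∘ hA.1.eigenvalues) *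
    (star hA.1.eigenvectorUnitary : Matrix n n 𝕜)

/-- The trace (nuclear) norm of a complex matrix: the trace of `√(AᴴA)`. -/
noncomputable def traceNorm {n : Type*} [Fintype n] [DecidableEq n]
    (A : Matrix n n ℂ) : ℝ :=
  ((Matrix.posSemidef_conjTranspose_mul_self A).sqrt.trace).re

/-- The squared Frobenius (Hilbert–Schmidt) norm of a complex matrix. -/
noncomputable def frobSq {n : Type*} [Fintype n] [DecidableEq n]
    (A : Matrix n n ℂ) : ℝ :=
  ((Aᴴ * A).trace).re

open scoped MatrixOrder

section CFC

variable {A : Type*} [NonUnitalRing A] [StarRing A] [TopologicalSpace A] [Module ℝ A]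
  [SMulCommClass ℝ A A] [IsScalarTower ℝ A A]
  [NonUnitalContinuousFunctionalCalculus ℝ A IsSelfAdjoint] [PartialOrder A] [StarOrderedRing A]
  [NonnegSpectrumClass ℝ A] [IsTopologicalRing A] [T2Space A]

lemma CFC.le_abs_self (a : A) (ha : IsSelfAdjoint a := by cfc_tac) : a ≤ CFC.abs a := by
  rw [← sub_nonneg, CFC.abs_sub_self a]
  exact smul_nonneg zero_le_two (CFC.negPart_nonneg a)

lemma CFC.neg_abs_le (a : A) (ha : IsSelfAdjoint a := by cfc_tac) : -CFC.abs a ≤ a := by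
  rw [neg_le_iff_add_nonneg, add_comm, CFC.abs_add_self a]
  exact smul_nonneg zero_le_two (CFC.posPart_nonneg a)

end CFC

namespace Matrix

variable {n 𝕜 : Type*} [RCLike 𝕜]

lemma abs_re_diag_le_of_neg_le_of_le {X Y : Matrix n n 𝕜} (h₁ : -X ≤ Y) (h₂ : Y ≤ X) (i : n) :
    |RCLike.re (Y i i)| ≤ RCLike.re (X i i) := by
  have h₁ := (RCLike.nonneg_iff.mp ((sub_nonneg.2 h₁).posSemidef.diag_nonneg (i := i))).1
  have h₂ := (RCLike.nonneg_iff.mp ((sub_nonneg.2 h₂).posSemidef.diag_nonneg (i := i))).1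
  simp only [sub_apply, neg_apply, sub_neg_eq_add, map_add, map_sub] at h₁ h₂
  exact abs_le.2 ⟨by linarith, by linarith⟩

variable [Fintype n] [DecidableEq n]

lemma PosSemidef.sqrt_eq_cfcSqrt {A : Matrix n n 𝕜} (hA : A.PosSemidef) :
    hA.sqrt = CFC.sqrt A := by
  rw [CFC.sqrt_eq_real_sqrt A hA.nonneg, cfcₙ_eq_cfc (hf0 := Real.sqrt_zero), hA.1.cfc_eq,
    IsHermitian.cfc, Unitary.conjStarAlgAut_apply]
  rfl

lemma trace_conjStarAlgAut (u : unitary (Matrix n n 𝕜)) (A : Matrix n n 𝕜) :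
    (Unitary.conjStarAlgAut 𝕜 _ u A).trace = A.trace := by
  rw [Unitary.conjStarAlgAut_apply, trace_mul_cycle, Unitary.coe_star_mul_self, one_mul]

lemma IsHermitian.sq_eigenvalues_le_abs_re_diag {S T D : Matrix n n 𝕜} (hS : S.IsHermitian)
    (h₁ : -T ≤ S) (h₂ : S ≤ T) (hD : S * T + T * S = D + D) (i : n) :
    hS.eigenvalues i ^ 2 ≤
      |RCLike.re (Unitary.conjStarAlgAut 𝕜 _ (star hS.eigenvectorUnitary) D i i)| := by
  set φ := Unitary.conjStarAlgAut 𝕜 (Matrix n n 𝕜) (star hS.eigenvectorUnitary)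
  set μ := hS.eigenvalues
  have hΛ : φ S = diagonal (RCLike.ofReal ∘ μ) := hS.conjStarAlgAut_star_eigenvectorUnitary
  have hdiag : RCLike.re (φ D i i) = μ i * RCLike.re (φ T i i) := by
    have := congrArg (fun X => RCLike.re (φ X i i)) hD
    simp only [map_add, map_mul, hΛ, add_apply, diagonal_mul, mul_diagonal, Function.comp_apply,
      RCLike.re_ofReal_mul, RCLike.re_mul_ofReal] at this
    linarith
  have hbound : |μ i| ≤ RCLike.re (φ T i i) := by
    have := abs_re_diag_le_of_neg_le_of_le (by simpa using OrderHomClass.mono φ h₁)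
      (OrderHomClass.mono φ h₂) i
    simpa [hΛ] using this
  rw [hdiag, abs_mul, ← sq_abs, sq]
  exact mul_le_mul_of_nonneg_left (hbound.trans (le_abs_self _)) (abs_nonneg _)

end Matrix

section

variable {n : Type*} [Fintype n] [DecidableEq n]

lemma traceNorm_eq_re_trace_abs (A : Matrix n n ℂ) : traceNorm A = (CFC.abs A).trace.re := by
  rw [traceNorm, PosSemidef.sqrt_eq_cfcSqrt, CFC.abs, star_eq_conjTranspose]

lemma sum_abs_re_diag_conjStarAlgAut_le_traceNorm {D : Matrix n n ℂ} (hD : D.IsHermitian)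
    (u : unitary (Matrix n n ℂ)) :
    ∑ i, |(Unitary.conjStarAlgAut ℂ _ u D i i).re| ≤ traceNorm D := by
  set φ := Unitary.conjStarAlgAut ℂ (Matrix n n ℂ) u
  calc ∑ i, |(φ D i i).re| ≤ ∑ i, (φ (CFC.abs D) i i).re := by
        gcongr with i
        exact abs_re_diag_le_of_neg_le_of_le
          (by simpa using OrderHomClass.mono φ (CFC.neg_abs_le D hD.isSelfAdjoint))
          (OrderHomClass.mono φ (CFC.le_abs_self D hD.isSelfAdjoint)) i
    _ = traceNorm D := by
        rw [traceNorm_eq_re_trace_abs, ← trace_conjStarAlgAut u, trace, Complex.re_sum]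
        rfl

lemma frobSq_eq_sum_sq_eigenvalues {S : Matrix n n ℂ} (hS : S.IsHermitian) :
    frobSq S = ∑ i, hS.eigenvalues i ^ 2 := by
  rw [frobSq, hS.eq, ← trace_conjStarAlgAut (star hS.eigenvectorUnitary), map_mul,
    hS.conjStarAlgAut_star_eigenvectorUnitary, diagonal_mul_diagonal, trace_diagonal,
    Complex.re_sum]
  simp [sq]

end

theorem frobSq_sqrt_sub_sqrt_le_traceNorm
    {n : Type*} [Fintype n] [DecidableEq n]
    (P Q : Matrix n n ℂ) (hP : P.PosSemidef) (hQ : Q.PosSemidef) :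
    frobSq (hP.sqrt - hQ.sqrt) ≤ traceNorm (P - Q) := by
  rw [hP.sqrt_eq_cfcSqrt, hQ.sqrt_eq_cfcSqrt]
  set S := CFC.sqrt P - CFC.sqrt Q
  set T := CFC.sqrt P + CFC.sqrt Q
  have hS : S.IsHermitian :=
    (CFC.sqrt_nonneg P).isSelfAdjoint.sub (CFC.sqrt_nonneg Q).isSelfAdjoint
  have hS_le : S ≤ T := by
    rw [← sub_nonneg, show T - S = CFC.sqrt Q + CFC.sqrt Q by simp only [S, T]; abel]
    exact add_nonneg (CFC.sqrt_nonneg Q) (CFC.sqrt_nonneg Q)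
  have neg_le_S : -T ≤ S := by
    rw [neg_le_iff_add_nonneg, show S + T = CFC.sqrt P + CFC.sqrt P by simp only [S, T]; abel]
    exact add_nonneg (CFC.sqrt_nonneg P) (CFC.sqrt_nonneg P)
  have hST : S * T + T * S = (P - Q) + (P - Q) := by
    simp only [S, T, sub_mul, mul_add, add_mul, mul_sub, CFC.sqrt_mul_sqrt_self P hP.nonneg,
      CFC.sqrt_mul_sqrt_self Q hQ.nonneg]
    noncomm_ring
  rw [frobSq_eq_sum_sq_eigenvalues hS]
  calc ∑ i, hS.eigenvalues i ^ 2
      ≤ ∑ i, |(Unitary.conjStarAlgAut ℂ _ (star hS.eigenvectorUnitary) (P - Q) i i).re| :=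
        Finset.sum_le_sum fun i _ => hS.sq_eigenvalues_le_abs_re_diag neg_le_S hS_le hST i
    _ ≤ traceNorm (P - Q) := sum_abs_re_diag_conjStarAlgAut_le_traceNorm (hP.1.sub hQ.1) _
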